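/- Summed upper-deviation bound for bonus-inflated means (Lemma 3(c)): Let W_1, …, W_T be i.i.d. 1-sub-Gaussian random variables with E[W_1] = 0, let T_1 ≤ T_2 ≤ T be positive reals and δ > 0. If l ≥ T_1·δ²/2, then Σ_{s = T_1+1}^{T_2} P( (1/s)·Σ_{i=1}^s W_i + √(2l/s) ≥ δ ) ≤ ( 2l + √(4πl) + 2 ) / δ² + 1 − T_1, where the sum is over integers s ∈ (T_1, T_2]. -/

import Mathlib

open MeasureTheory ProbabilityTheory Real

/-- A real random variable `X` is `σ`-sub-Gaussian under `P`:
`E[exp (λ X)] ≤ exp (λ² σ² / 2)` for all `λ ∈ ℝ` (with the implicit integrability). -/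
def IsSubGaussian {Ω : Type*} [MeasurableSpace Ω] (P : Measure Ω) (σ : ℝ) (X : Ω → ℝ) : Prop :=
  ∀ t : ℝ, Integrable (fun ω => Real.exp (t * X ω)) P ∧
    ∫ ω, Real.exp (t * X ω) ∂P ≤ Real.exp (t ^ 2 * σ ^ 2 / 2)

lemma gauss_half_first_moment : ∫ x in Set.Ioi (0:ℝ), x * Real.exp (-x^2) = 1/2 := by
  have h := MeasureTheory.integral_Ioi_of_hasDerivAt_of_tendsto'
    (f := fun x : ℝ => -Real.exp (-x^2)/2) (f' := fun x : ℝ => x * Real.exp (-x^2))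
    (a := 0) (m := 0) ?_ ?_ ?_
  · rw [h]; norm_num
  · intro x hx
    have h1 : HasDerivAt (fun x : ℝ => -x^2) (-(2*x)) x := by
      exact (hasDerivAt_pow 2 x).neg.congr_deriv (by norm_num)
    have := (h1.exp.neg.div_const 2)
    exact this.congr_deriv (by ring)
  · have := (integrable_mul_exp_neg_mul_sq (b := 1) one_pos).integrableOn (s := Set.Ioi 0)
    simpa using this
  · have h1 : Filter.Tendsto (fun x : ℝ => Real.exp (-x^2)) Filter.atTop (nhds 0) := by
      have : Filter.Tendsto (fun x : ℝ => -x^2) Filter.atTop Filter.atBot := by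
        apply Filter.tendsto_neg_atBot_iff.mpr
        exact Filter.tendsto_pow_atTop (two_ne_zero)
      exact Real.tendsto_exp_atBot.comp this
    have := (h1.neg.div_const 2)
    simpa using this

lemma gauss_half_zeroth_moment : ∫ x in Set.Ioi (0:ℝ), Real.exp (-x^2) = Real.sqrt Real.pi / 2 := by
  have := integral_gaussian_Ioi 1
  simpa using this

set_option maxHeartbeats 1000000 in
/-- **Summed upper-deviation bound for bonus-inflated means (Lemma 3(c)).** -/
theorem summed_upper_deviation_bonus
    {Ω : Type*} [MeasurableSpace Ω] (P : Measure Ω) [IsProbabilityMeasure P]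
    (T : ℕ) (hT : 0 < T)
    (W : ℕ → Ω → ℝ) (hWmeas : ∀ i, Measurable (W i))
    (hWsub : ∀ i ∈ Finset.Icc 1 T, IsSubGaussian P 1 (W i))
    (hWmean : ∀ i ∈ Finset.Icc 1 T, ∫ ω, W i ω ∂P = 0)
    (hWiid : ∀ i ∈ Finset.Icc 1 T, Measure.map (W i) P = Measure.map (W 1) P)
    (hWindep : iIndepFun (fun i : Fin T => W (i + 1)) P)
    (T₁ T₂ : ℝ) (hT₁ : 0 < T₁) (h12 : T₁ ≤ T₂) (h2T : T₂ ≤ T)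
    (δ : ℝ) (hδ : 0 < δ) (l : ℝ) (hl : T₁ * δ ^ 2 / 2 ≤ l) :
    ∑ s ∈ Finset.Icc (⌊T₁⌋₊ + 1) ⌊T₂⌋₊,
        (P {ω | δ ≤ (∑ i ∈ Finset.Icc 1 s, W i ω) / s + Real.sqrt (2 * l / s)}).toReal
      ≤ (2 * l + Real.sqrt (4 * Real.pi * l) + 2) / δ ^ 2 + 1 - T₁ := by
  classical
  set a := ⌊T₁⌋₊ with ha
  set b := ⌊T₂⌋₊ with hb
  set m : ℝ := 2 * l / δ ^ 2 with hm
  have hl0 : 0 < l := lt_of_lt_of_le (by positivity) hl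
  have hm0 : 0 < m := by positivity
  have hmT₁ : T₁ ≤ m := by
    rw [hm, le_div_iff₀ (by positivity)]
    nlinarith
  have haT₁ : (a : ℝ) ≤ T₁ := Nat.floor_le hT₁.le
  have hab : a ≤ b := Nat.floor_le_floor h12
  have hbT₂ : (b : ℝ) ≤ T₂ := Nat.floor_le (le_trans hT₁.le h12)
  have hfloor : T₁ - 1 < (a : ℝ) := by
    have := Nat.lt_floor_add_one T₁; linarith
  -- the dominating function
  set g : ℝ → ℝ := fun x => Real.exp (-(max (δ * Real.sqrt (x/2) - Real.sqrt l) 0)^2) with hg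
  have hg_cont : Continuous g := by
    apply Real.continuous_exp.comp
    apply Continuous.neg
    apply Continuous.pow
    exact ((continuous_const.mul (Real.continuous_sqrt.comp (continuous_id.div_const 2))).sub
      continuous_const).max continuous_const
  have hg_nonneg : ∀ x, 0 ≤ g x := fun x => (Real.exp_pos _).le
  have hg_le_one : ∀ x, g x ≤ 1 := by
    intro x
    rw [hg]
    apply Real.exp_le_one_iff.mpr
    simp [neg_nonpos]
  have hg_anti : Antitone g := by
    intro x y hxy
    apply Real.exp_le_exp.mpr
    apply neg_le_neg
    apply pow_le_pow_left₀ (le_max_right _ _)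
    apply max_le_max _ le_rfl
    have : Real.sqrt (x/2) ≤ Real.sqrt (y/2) := Real.sqrt_le_sqrt (by linarith)
    nlinarith
  have hδm : δ * Real.sqrt (m/2) = Real.sqrt l := by
    have h1 : m / 2 = l / δ ^ 2 := by rw [hm]; ring
    rw [h1, Real.sqrt_div hl0.le, Real.sqrt_sq hδ.le]
    field_simp
  -- Chernoff bound for partial sums
  have hchern : ∀ s : ℕ, 1 ≤ s → s ≤ T → ∀ ε : ℝ, 0 ≤ ε →
      (P {ω | ε ≤ ∑ i ∈ Finset.Icc 1 s, W i ω}).toReal ≤ Real.exp (-ε^2 / (2*s)) := by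
    intro s hs1 hsT ε hε
    have hspos : (0:ℝ) < s := by exact_mod_cast hs1
    set t : ℝ := ε / s with ht
    have ht0 : 0 ≤ t := div_nonneg hε hspos.le
    set X : Fin T → Ω → ℝ := fun i => W (i + 1) with hX
    set F : Finset (Fin T) := Finset.univ.filter (fun j => (j : ℕ) < s) with hF
    have hmemF : ∀ j ∈ F, (j : ℕ) + 1 ∈ Finset.Icc 1 T := by
      intro j hj
      simp only [Finset.mem_Icc]
      exact ⟨le_add_self, by omega⟩
    have himg : F.image (fun j : Fin T => (j : ℕ) + 1) = Finset.Icc 1 s := by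
      ext i
      simp only [hF, Finset.mem_image, Finset.mem_filter, Finset.mem_univ, true_and,
        Finset.mem_Icc]
      constructor
      · rintro ⟨j, hj, rfl⟩; omega
      · rintro ⟨h1, h2⟩
        refine ⟨⟨i - 1, by omega⟩, by simp; omega, by simp; omega⟩
    have hinjF : ∀ x ∈ F, ∀ y ∈ F, (x : ℕ) + 1 = (y : ℕ) + 1 → x = y := by
      intro x _ y _ h
      exact Fin.ext (by omega)
    have hsum_eq : ∀ ω, (∑ j ∈ F, X j) ω = ∑ i ∈ Finset.Icc 1 s, W i ω := by
      intro ω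
      rw [Finset.sum_apply, ← himg, Finset.sum_image hinjF]
    have hcard : F.card = s := by
      have h1 : (F.image (fun j : Fin T => (j : ℕ) + 1)).card = F.card :=
        Finset.card_image_of_injOn (fun x hx y hy h => hinjF x hx y hy h)
      rw [himg] at h1
      simpa using h1.symm
    have hint : Integrable (fun ω => Real.exp (t * (∑ j ∈ F, X j) ω)) P :=
      hWindep.integrable_exp_mul_sum (fun i => hWmeas _)
        (fun j hj => ((hWsub _ (hmemF j hj)) t).1)
    have hmgf_sum : mgf (∑ j ∈ F, X j) P t = ∏ j ∈ F, mgf (X j) P t :=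
      hWindep.mgf_sum (fun i => hWmeas _) F
    have hmgf_le : mgf (∑ j ∈ F, X j) P t ≤ Real.exp (s * t^2 / 2) := by
      rw [hmgf_sum]
      calc ∏ j ∈ F, mgf (X j) P t ≤ ∏ j ∈ F, Real.exp (t^2/2) := by
            apply Finset.prod_le_prod (fun j _ => mgf_nonneg)
            intro j hj
            have h2 := ((hWsub _ (hmemF j hj)) t).2
            simpa [mgf, hX] using h2
        _ = Real.exp (t^2/2) ^ F.card := Finset.prod_const _
        _ = Real.exp (s * t^2 / 2) := by
            rw [hcard, ← Real.exp_nat_mul]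
            congr 1
            ring
    have hcher := measure_ge_le_exp_mul_mgf (μ := P) (X := ∑ j ∈ F, X j) ε ht0 hint
    have hset : {ω | ε ≤ ∑ i ∈ Finset.Icc 1 s, W i ω} = {ω | ε ≤ (∑ j ∈ F, X j) ω} := by
      ext ω; rw [Set.mem_setOf_eq, Set.mem_setOf_eq, hsum_eq]
    rw [hset]
    calc (P {ω | ε ≤ (∑ j ∈ F, X j) ω}).toReal
        ≤ Real.exp (-t * ε) * mgf (∑ j ∈ F, X j) P t := hcher
      _ ≤ Real.exp (-t * ε) * Real.exp (s * t^2 / 2) := by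
          apply mul_le_mul_of_nonneg_left hmgf_le (Real.exp_pos _).le
      _ = Real.exp (-ε^2 / (2*s)) := by
          rw [← Real.exp_add]
          congr 1
          rw [ht]
          field_simp
          ring
  -- per-term bound
  have key : ∀ s ∈ Finset.Icc (a+1) b,
      (P {ω | δ ≤ (∑ i ∈ Finset.Icc 1 s, W i ω) / s + Real.sqrt (2 * l / s)}).toReal
        ≤ g s := by
    intro s hs
    rw [Finset.mem_Icc] at hs
    have hs1 : 1 ≤ s := le_trans (by omega) hs.1
    have hsT : s ≤ T := by
      have h1 : (s : ℝ) ≤ T₂ := le_trans (by exact_mod_cast hs.2) hbT₂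
      exact_mod_cast le_trans h1 h2T
    have hspos : (0:ℝ) < s := by exact_mod_cast hs1
    rcases le_or_gt (s : ℝ) m with hsm | hsm
    · -- trivial bound by 1
      have hgs : g s = 1 := by
        have h1 : δ * Real.sqrt ((s:ℝ)/2) ≤ Real.sqrt l := by
          rw [← hδm]
          have : Real.sqrt ((s:ℝ)/2) ≤ Real.sqrt (m/2) := Real.sqrt_le_sqrt (by linarith)
          nlinarith [Real.sqrt_nonneg ((s:ℝ)/2)]
        simp only [hg]
        rw [max_eq_right (by linarith)]
        norm_num
      rw [hgs]
      calc (P _).toReal ≤ (P Set.univ).toReal :=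
            ENNReal.toReal_mono (measure_ne_top _ _) (measure_mono (Set.subset_univ _))
        _ = 1 := by simp
    · -- Chernoff regime
      have hlub : Real.sqrt l < δ * Real.sqrt ((s:ℝ)/2) := by
        rw [← hδm]
        have : Real.sqrt (m/2) < Real.sqrt ((s:ℝ)/2) := Real.sqrt_lt_sqrt (by linarith) (by linarith)
        nlinarith
      have hc : Real.sqrt (2*l/(s:ℝ)) < δ := by
        have h2ls : 2*l/(s:ℝ) < δ^2 := by
          rw [div_lt_iff₀ hspos]
          rw [hm, div_lt_iff₀ (by positivity)] at hsm
          nlinarith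
        calc Real.sqrt (2*l/(s:ℝ)) < Real.sqrt (δ^2) :=
              Real.sqrt_lt_sqrt (by positivity) h2ls
          _ = δ := Real.sqrt_sq hδ.le
      set c : ℝ := Real.sqrt (2*l/(s:ℝ)) with hcdef
      set ε : ℝ := s * (δ - c) with hε
      have hε0 : 0 ≤ ε := mul_nonneg hspos.le (by linarith)
      have hset : {ω | δ ≤ (∑ i ∈ Finset.Icc 1 s, W i ω) / s + c}
          = {ω | ε ≤ ∑ i ∈ Finset.Icc 1 s, W i ω} := by
        ext ω
        rw [Set.mem_setOf_eq, Set.mem_setOf_eq]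
        constructor
        · intro h
          have h1 : δ - c ≤ (∑ i ∈ Finset.Icc 1 s, W i ω) / s := by linarith
          rw [le_div_iff₀ hspos] at h1
          rw [hε]; linarith
        · intro h
          have h1 : (δ - c) * s ≤ ∑ i ∈ Finset.Icc 1 s, W i ω := by rw [hε] at h; linarith
          rw [← le_div_iff₀ hspos] at h1
          linarith
      rw [hset]
      have hch := hchern s hs1 hsT ε hε0
      refine le_trans hch (le_of_eq ?_)
      -- exp (-ε²/(2s)) = g s
      have hmax : max (δ * Real.sqrt ((s:ℝ)/2) - Real.sqrt l) 0
          = δ * Real.sqrt ((s:ℝ)/2) - Real.sqrt l := max_eq_left (by linarith)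
      have hfac : δ * Real.sqrt ((s:ℝ)/2) - Real.sqrt l = Real.sqrt ((s:ℝ)/2) * (δ - c) := by
        rw [mul_sub]
        have : Real.sqrt ((s:ℝ)/2) * c = Real.sqrt l := by
          rw [hcdef, ← Real.sqrt_mul (by positivity)]
          congr 1
          field_simp
        rw [this]
        ring
      have hsq : (Real.sqrt ((s:ℝ)/2) * (δ - c))^2 = ((s:ℝ)/2) * (δ - c)^2 := by
        rw [mul_pow, Real.sq_sqrt (by positivity : (0:ℝ) ≤ (s:ℝ)/2)]
      simp only [hg]
      rw [hmax, hfac, hsq, hε]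
      congr 1
      field_simp
  -- sum ≤ integral
  have hstep1 : ∑ s ∈ Finset.Icc (a+1) b,
      (P {ω | δ ≤ (∑ i ∈ Finset.Icc 1 s, W i ω) / s + Real.sqrt (2 * l / s)}).toReal
      ≤ ∑ s ∈ Finset.Icc (a+1) b, g s := Finset.sum_le_sum key
  have hBcast : (a : ℝ) + ((b - a : ℕ) : ℝ) = (b : ℝ) := by
    rw [Nat.cast_sub hab]; ring
  have hstep2 : ∑ s ∈ Finset.Icc (a+1) b, g s ≤ ∫ x in (a:ℝ)..(b:ℝ), g x := by
    have hsum_range : ∑ s ∈ Finset.Icc (a+1) b, g s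
        = ∑ i ∈ Finset.range (b - a), g ((a:ℝ) + ((i + 1 : ℕ) : ℝ)) := by
      rw [← Finset.Ico_add_one_right_eq_Icc, Finset.sum_Ico_eq_sum_range]
      have hn : b + 1 - (a + 1) = b - a := by omega
      rw [hn]
      apply Finset.sum_congr rfl
      intro i _
      congr 1
      push_cast
      ring
    rw [hsum_range, ← hBcast]
    exact (hg_anti.antitoneOn _).sum_le_integral
  -- change of variables for the tail integral
  set sl : ℝ := Real.sqrt l with hsl
  have hsl0 : 0 ≤ sl := Real.sqrt_nonneg l
  set φ : ℝ → ℝ := fun u => (u + sl)^2 * (2/δ^2) with hφ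
  set φ' : ℝ → ℝ := fun u => (2*(u + sl)) * (2/δ^2) with hφ'
  have hderiv : ∀ x ∈ Set.Ioi (0:ℝ), HasDerivWithinAt φ (φ' x) (Set.Ioi 0) x := by
    intro x hx
    have h1 : HasDerivAt (fun u : ℝ => (u + sl)^2) (2*(x + sl)) x := by
      have := ((hasDerivAt_id x).add_const sl).pow 2
      exact this.congr_deriv (by norm_num)
    exact (h1.mul_const (2/δ^2)).hasDerivWithinAt
  have hinj : Set.InjOn φ (Set.Ioi 0) := by
    have hsm : StrictMonoOn φ (Set.Ioi 0) := by
      intro x hx y hy hxy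
      simp only [Set.mem_Ioi] at hx hy
      simp only [hφ]
      apply mul_lt_mul_of_pos_right _ (by positivity)
      apply pow_lt_pow_left₀ (by linarith) (by linarith) (by norm_num)
    exact hsm.injOn
  have himage : φ '' Set.Ioi 0 = Set.Ioi m := by
    ext y
    simp only [Set.mem_image, Set.mem_Ioi]
    constructor
    · rintro ⟨u, hu, rfl⟩
      simp only [hφ]
      have h1 : m = sl^2 * (2/δ^2) := by
        rw [hsl, Real.sq_sqrt hl0.le, hm]; ring
      rw [h1]
      apply mul_lt_mul_of_pos_right _ (by positivity)
      apply pow_lt_pow_left₀ (by linarith) hsl0 (by norm_num)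
    · intro hy
      have hy0 : 0 < y := lt_trans hm0 hy
      refine ⟨δ * Real.sqrt (y/2) - sl, ?_, ?_⟩
      · have h5 : Real.sqrt (m/2) < Real.sqrt (y/2) := Real.sqrt_lt_sqrt (by linarith) (by linarith)
        have h6 := mul_lt_mul_of_pos_left h5 hδ
        show (0:ℝ) < _
        linarith [hδm]
      · simp only [hφ]
        have h1 : δ * Real.sqrt (y/2) - sl + sl = δ * Real.sqrt (y/2) := by ring
        rw [h1, mul_pow, Real.sq_sqrt (by linarith : (0:ℝ) ≤ y/2)]
        field_simp
  have hCV := integral_image_eq_integral_abs_deriv_smul measurableSet_Ioi hderiv hinj g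
  rw [himage] at hCV
  -- simplify the substituted integrand
  have hsubst : ∀ u ∈ Set.Ioi (0:ℝ),
      |φ' u| • g (φ u) = (4/δ^2) * (u * Real.exp (-u^2)) + (4*sl/δ^2) * Real.exp (-u^2) := by
    intro u hu
    simp only [Set.mem_Ioi] at hu
    have husl : 0 < u + sl := by linarith
    have hgφ : g (φ u) = Real.exp (-u^2) := by
      have h1 : φ u / 2 = (u + sl)^2 / δ^2 := by rw [hφ]; field_simp
      have h2 : Real.sqrt (φ u / 2) = (u + sl) / δ := by
        rw [h1, Real.sqrt_div (sq_nonneg _), Real.sqrt_sq husl.le, Real.sqrt_sq hδ.le]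
      simp only [hg]
      rw [h2]
      have h3 : δ * ((u + sl) / δ) - Real.sqrt l = u := by
        rw [← hsl]; field_simp; ring
      rw [h3, max_eq_left hu.le]
    rw [hgφ, smul_eq_mul]
    have h4 : |φ' u| = (2*(u + sl)) * (2/δ^2) := by
      rw [hφ']
      apply abs_of_nonneg
      positivity
    rw [h4]
    ring
  have hIg0 : IntegrableOn (fun u : ℝ => Real.exp (-u^2)) (Set.Ioi 0) := by
    have := (integrable_exp_neg_mul_sq (b := 1) one_pos).integrableOn (s := Set.Ioi 0)
    simpa using this
  have hIg1 : IntegrableOn (fun u : ℝ => u * Real.exp (-u^2)) (Set.Ioi 0) := by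
    have := (integrable_mul_exp_neg_mul_sq (b := 1) one_pos).integrableOn (s := Set.Ioi 0)
    simpa using this
  have hIcomb : IntegrableOn
      (fun u : ℝ => (4/δ^2) * (u * Real.exp (-u^2)) + (4*sl/δ^2) * Real.exp (-u^2))
      (Set.Ioi 0) := by
    exact (hIg1.const_mul _).add (hIg0.const_mul _)
  have hIsubst : IntegrableOn (fun u => |φ' u| • g (φ u)) (Set.Ioi 0) := by
    apply hIcomb.congr_fun (fun u hu => (hsubst u hu).symm) measurableSet_Ioi
  have hIg_Ioi : IntegrableOn g (Set.Ioi m) := by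
    rw [← himage]
    exact (integrableOn_image_iff_integrableOn_abs_deriv_smul measurableSet_Ioi hderiv hinj g).mpr
      hIsubst
  have htail : ∫ x in Set.Ioi m, g x = 2/δ^2 + 2*sl*Real.sqrt Real.pi/δ^2 := by
    rw [hCV]
    rw [MeasureTheory.setIntegral_congr_fun measurableSet_Ioi hsubst]
    rw [MeasureTheory.integral_add (hIg1.const_mul _) (hIg0.const_mul _)]
    rw [MeasureTheory.integral_const_mul, MeasureTheory.integral_const_mul]
    rw [gauss_half_first_moment, gauss_half_zeroth_moment]
    ring
  -- interval integral estimate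
  have hintg : ∀ x y : ℝ, IntervalIntegrable g MeasureTheory.volume x y :=
    fun x y => hg_cont.intervalIntegrable x y
  have haM : (a : ℝ) ≤ m := le_trans haT₁ hmT₁
  set C : ℝ := max (b : ℝ) m with hC
  have hbC : (b:ℝ) ≤ C := le_max_left _ _
  have hmC : m ≤ C := le_max_right _ _
  have hstep3 : ∫ x in (a:ℝ)..(b:ℝ), g x ≤ (m - a) + (2/δ^2 + 2*sl*Real.sqrt Real.pi/δ^2) := by
    have h1 : ∫ x in (a:ℝ)..(b:ℝ), g x ≤ ∫ x in (a:ℝ)..C, g x := by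
      have hadd : ∫ x in (a:ℝ)..C, g x = (∫ x in (a:ℝ)..(b:ℝ), g x) + ∫ x in (b:ℝ)..C, g x :=
        (intervalIntegral.integral_add_adjacent_intervals (hintg _ _) (hintg _ _)).symm
      have hnn : 0 ≤ ∫ x in (b:ℝ)..C, g x :=
        intervalIntegral.integral_nonneg hbC (fun x _ => hg_nonneg x)
      linarith
    have h2 : ∫ x in (a:ℝ)..C, g x = (∫ x in (a:ℝ)..m, g x) + ∫ x in m..C, g x :=
      (intervalIntegral.integral_add_adjacent_intervals (hintg _ _) (hintg _ _)).symm
    have h3 : ∫ x in (a:ℝ)..m, g x ≤ m - a := by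
      have := intervalIntegral.integral_mono_on haM (hintg _ _)
        (intervalIntegrable_const (c := (1:ℝ))) (fun x _ => hg_le_one x)
      simpa using this
    have h4 : ∫ x in m..C, g x ≤ ∫ x in Set.Ioi m, g x := by
      rw [intervalIntegral.integral_of_le hmC]
      apply MeasureTheory.setIntegral_mono_set hIg_Ioi
        (Filter.Eventually.of_forall (fun x => hg_nonneg x))
        (Filter.Eventually.of_forall Set.Ioc_subset_Ioi_self)
    rw [htail] at h4
    linarith
  -- put everything together
  have hrhs : (2 * l + Real.sqrt (4 * Real.pi * l) + 2) / δ ^ 2 + 1 - T₁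
      = m + (Real.sqrt (4 * Real.pi * l) + 2)/δ^2 + 1 - T₁ := by
    rw [hm]; ring
  have hsqrt4 : Real.sqrt (4 * Real.pi * l) = 2 * sl * Real.sqrt Real.pi := by
    rw [hsl]
    rw [show (4:ℝ) * Real.pi * l = (2*Real.sqrt Real.pi*Real.sqrt l)^2 by
      rw [mul_pow, mul_pow, Real.sq_sqrt Real.pi_pos.le, Real.sq_sqrt hl0.le]; ring]
    rw [Real.sqrt_sq (by positivity)]
    ring
  calc ∑ s ∈ Finset.Icc (a+1) b,
      (P {ω | δ ≤ (∑ i ∈ Finset.Icc 1 s, W i ω) / s + Real.sqrt (2 * l / s)}).toReal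
      ≤ ∑ s ∈ Finset.Icc (a+1) b, g s := hstep1
    _ ≤ ∫ x in (a:ℝ)..(b:ℝ), g x := hstep2
    _ ≤ (m - a) + (2/δ^2 + 2*sl*Real.sqrt Real.pi/δ^2) := hstep3
    _ ≤ (2 * l + Real.sqrt (4 * Real.pi * l) + 2) / δ ^ 2 + 1 - T₁ := by
        rw [hrhs, hsqrt4]
        have : (2 * sl * Real.sqrt Real.pi + 2)/δ^2
            = 2/δ^2 + 2*sl*Real.sqrt Real.pi/δ^2 := by ring
        rw [this]
        linarith
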